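/- arXiv:2603.27503 — 3 statements merged into one kernel-verified Lean document; each statement's English description precedes it below -/
import Mathlib

section
/- Let u : ℝ² → ℝ² be continuously differentiable and t₁ ∈ ℝ. Let e₁ = (√3/2, 1/2), e₂ = (−√3/2, 1/2), e₃ = (0, −1), and set f_ν(X) = e_νᵀ (∇u(X)) e_ν for ν = 1,2,3. Let w₁ = (0,0), w₂ = (√3, 0), w₃ = (√3/2, 3/2) and K = (4π/(3√3), 0), so that e^{iK·w₁} = 1, e^{iK·w₂} = e^{i4π/3}, e^{iK·w₃} = e^{i2π/3}. Define the effective Hamiltonian acting on continuously differentiable Φ = (Φ^A, Φ^B) : ℝ² → ℂ² by (H_eff Φ)^A = Σ_{ν=1}^{3} e^{iK·w_ν} (w_ν·∇Φ^B + t₁ f_ν Φ^B) and (H_eff Φ)^B = Σ_{ν=1}^{3} e^{−iK·w_ν} (−w_ν·∇Φ^A + t₁ f_ν Φ^A). Define the magnetic potential A₁(X) = −(t₁/2)(∂_{X₁}u₁ − ∂_{X₂}u₂)(X), A₂(X) = (t₁/2)(∂_{X₁}u₂ + ∂_{X₂}u₁)(X), and the magnetic Dirac operator 𝒟_A Φ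 = (3/2)[(−i∂_{X₁} − A₁)σ₁ Φ + (−i∂_{X₂} − A₂)σ₂ Φ]. Then with U = diag(e^{−iπ/6}, e^{iπ/6}) one has, pointwise for every X ∈ ℝ² and every continuously differentiable Φ : ℝ² → ℂ², (H_eff Φ)(X) = U · (𝒟_A (U* Φ))(X); that is, H_eff is unitarily equivalent to the magnetic Dirac operator 𝒟_A via the constant unitary matrix U. -/
noncomputable section

open Complex Real

/-- Partial derivative in the first variable of a function on `ℝ × ℝ`. -/
def pdx {E : Type*} [NormedAddCommGroup E] [NormedSpace ℝ E] (g : ℝ × ℝ → E) (X : ℝ × ℝ) : E :=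
  deriv (fun t => g (t, X.2)) X.1

/-- Partial derivative in the second variable of a function on `ℝ × ℝ`. -/
def pdy {E : Type*} [NormedAddCommGroup E] [NormedSpace ℝ E] (g : ℝ × ℝ → E) (X : ℝ × ℝ) : E :=
  deriv (fun t => g (X.1, t)) X.2

/-- The bond vectors `e₁ = (√3/2, 1/2)`, `e₂ = (−√3/2, 1/2)`, `e₃ = (0, −1)`. -/
def ee : Fin 3 → ℝ × ℝ := ![(Real.sqrt 3 / 2, 1 / 2), (-(Real.sqrt 3) / 2, 1 / 2), (0, -1)]

/-- The vectors `w₁ = (0,0)`, `w₂ = (√3, 0)`, `w₃ = (√3/2, 3/2)`. -/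
def ww : Fin 3 → ℝ × ℝ := ![(0, 0), (Real.sqrt 3, 0), (Real.sqrt 3 / 2, 3 / 2)]

/-- The high-symmetry quasimomentum `K = (4π/(3√3), 0)`. -/
def KK : ℝ × ℝ := (4 * π / (3 * Real.sqrt 3), 0)

/-- Euclidean dot product on `ℝ × ℝ`. -/
def rdot (a b : ℝ × ℝ) : ℝ := a.1 * b.1 + a.2 * b.2

/-- The strain function `f_ν(X) = e_νᵀ (∇u(X)) e_ν`, where the Jacobian `∇u` has entries
`(∇u)_{ij} = ∂_{X_j} u_i`. -/
def fstrain (u : ℝ × ℝ → ℝ × ℝ) (ν : Fin 3) (X : ℝ × ℝ) : ℝ :=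
  (ee ν).1 * ((ee ν).1 * pdx (fun Y => (u Y).1) X + (ee ν).2 * pdy (fun Y => (u Y).1) X)
    + (ee ν).2 * ((ee ν).1 * pdx (fun Y => (u Y).2) X + (ee ν).2 * pdy (fun Y => (u Y).2) X)

/-- A-component of the effective Hamiltonian
`(H_eff Φ)^A = Σ_ν e^{iK·w_ν} (w_ν·∇Φ^B + t₁ f_ν Φ^B)`. -/
def HeffA (u : ℝ × ℝ → ℝ × ℝ) (t1 : ℝ) (ΦA ΦB : ℝ × ℝ → ℂ) (X : ℝ × ℝ) : ℂ :=
  ∑ ν : Fin 3, Complex.exp (I * ((rdot KK (ww ν) : ℝ) : ℂ)) *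
    (((ww ν).1 : ℂ) * pdx ΦB X + ((ww ν).2 : ℂ) * pdy ΦB X
      + (t1 : ℂ) * ((fstrain u ν X : ℝ) : ℂ) * ΦB X)

/-- B-component of the effective Hamiltonian
`(H_eff Φ)^B = Σ_ν e^{−iK·w_ν} (−w_ν·∇Φ^A + t₁ f_ν Φ^A)`. -/
def HeffB (u : ℝ × ℝ → ℝ × ℝ) (t1 : ℝ) (ΦA ΦB : ℝ × ℝ → ℂ) (X : ℝ × ℝ) : ℂ :=
  ∑ ν : Fin 3, Complex.exp (-I * ((rdot KK (ww ν) : ℝ) : ℂ)) *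
    (-(((ww ν).1 : ℂ) * pdx ΦA X) - ((ww ν).2 : ℂ) * pdy ΦA X
      + (t1 : ℂ) * ((fstrain u ν X : ℝ) : ℂ) * ΦA X)

/-- First component of the effective magnetic potential
`A₁(X) = −(t₁/2)(∂_{X₁}u₁ − ∂_{X₂}u₂)`. -/
def Aone (u : ℝ × ℝ → ℝ × ℝ) (t1 : ℝ) (X : ℝ × ℝ) : ℝ :=
  -(t1 / 2) * (pdx (fun Y => (u Y).1) X - pdy (fun Y => (u Y).2) X)

/-- Second component of the effective magnetic potential
`A₂(X) = (t₁/2)(∂_{X₁}u₂ + ∂_{X₂}u₁)`. -/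
def Atwo (u : ℝ × ℝ → ℝ × ℝ) (t1 : ℝ) (X : ℝ × ℝ) : ℝ :=
  (t1 / 2) * (pdx (fun Y => (u Y).2) X + pdy (fun Y => (u Y).1) X)

/-- A-component of the magnetic Dirac operator
`𝒟_A Φ = (3/2)[(−i∂₁ − A₁)σ₁Φ + (−i∂₂ − A₂)σ₂Φ]`. -/
def DiracA_A (u : ℝ × ℝ → ℝ × ℝ) (t1 : ℝ) (ΦA ΦB : ℝ × ℝ → ℂ) (X : ℝ × ℝ) : ℂ :=
  (3 / 2) * ((-I * pdx ΦB X - ((Aone u t1 X : ℝ) : ℂ) * ΦB X)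
    + (-(pdy ΦB X) + I * ((Atwo u t1 X : ℝ) : ℂ) * ΦB X))

/-- B-component of the magnetic Dirac operator. -/
def DiracA_B (u : ℝ × ℝ → ℝ × ℝ) (t1 : ℝ) (ΦA ΦB : ℝ × ℝ → ℂ) (X : ℝ × ℝ) : ℂ :=
  (3 / 2) * ((-I * pdx ΦA X - ((Aone u t1 X : ℝ) : ℂ) * ΦA X)
    + (pdy ΦA X - I * ((Atwo u t1 X : ℝ) : ℂ) * ΦA X))

/-!
At the Dirac point the phases `e^{iK·w_ν}` are `1, e^{4πi/3}, e^{2πi/3}`, and `H_eff` reduces to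
three lattice sums:
`∑ e^{iK·w_ν} w_ν = -(3/2) e^{-iπ/3} (i, 1)` and
`∑ e^{iK·w_ν} e_νᵀ M e_ν = (3/4) e^{-iπ/3} ((M₁₁ - M₂₂) + i (M₁₂ + M₂₁))`.
The common factor `e^{-iπ/3}` is the square of the entry `e^{-iπ/6}` of `U`, so conjugating by `U`
removes it; the `B` row uses the complex conjugate phases.
-/

section

variable {𝕜 : Type*} [NormedField 𝕜] [NormedAlgebra ℝ 𝕜]

lemma pdx_const_mul (c : 𝕜) (g : ℝ × ℝ → 𝕜) (X : ℝ × ℝ) :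
    pdx (fun Y => c * g Y) X = c * pdx g X :=
  deriv_const_mul_field c

lemma pdy_const_mul (c : 𝕜) (g : ℝ × ℝ → 𝕜) (X : ℝ × ℝ) :
    pdy (fun Y => c * g Y) X = c * pdy g X :=
  deriv_const_mul_field c

end

def phase (ν : Fin 3) : ℂ := Complex.exp (I * ((rdot KK (ww ν) : ℝ) : ℂ))

lemma exp_I_mul_ofReal (θ : ℝ) :
    Complex.exp (I * θ) = Real.cos θ + Real.sin θ * I := by
  rw [mul_comm, Complex.exp_mul_I, ← Complex.ofReal_cos, ← Complex.ofReal_sin]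

lemma rdot_KK_ww : rdot KK (ww 0) = 0 ∧ rdot KK (ww 1) = π / 3 + π ∧ rdot KK (ww 2) = π - π / 3 := by
  have : Real.sqrt 3 ≠ 0 := by positivity
  refine ⟨by simp [rdot, KK, ww], ?_, ?_⟩ <;>
    simp only [rdot, KK, ww, Matrix.cons_val_one, Matrix.cons_val, mul_zero, add_zero] <;>
    field_simp <;> ring

lemma phase_values :
    phase 0 = 1 ∧ phase 1 = -(1 / 2) - (Real.sqrt 3 / 2 : ℝ) * I ∧
      phase 2 = -(1 / 2) + (Real.sqrt 3 / 2 : ℝ) * I := by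
  obtain ⟨h0, h1, h2⟩ := rdot_KK_ww
  simp only [phase, h0, h1, h2, exp_I_mul_ofReal, Real.cos_add_pi, Real.sin_add_pi, Real.cos_pi_sub,
    Real.sin_pi_sub, Real.cos_pi_div_three, Real.sin_pi_div_three]
  refine ⟨by simp, by push_cast; ring, by push_cast; ring⟩

lemma exp_neg_I_pi_div_three : Complex.exp (-I * (π / 3)) = 1 / 2 - (Real.sqrt 3 / 2 : ℝ) * I := by
  have : -I * (π / 3) = I * ((-(π / 3) : ℝ) : ℂ) := by push_cast; ring
  rw [this, exp_I_mul_ofReal, Real.cos_neg, Real.sin_neg, Real.cos_pi_div_three, Real.sin_pi_div_three]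
  push_cast; ring

lemma ofReal_sqrt_three_sq : ((Real.sqrt 3 : ℝ) : ℂ) ^ 2 = 3 := by
  rw [← Complex.ofReal_pow, Real.sq_sqrt (by norm_num)]; norm_num

lemma sum_phase_mul_ww_fst :
    ∑ ν, phase ν * (ww ν).1 = -(3 / 2) * I * Complex.exp (-I * (π / 3)) := by
  obtain ⟨p0, p1, p2⟩ := phase_values
  simp only [Fin.sum_univ_three, p0, p1, p2, exp_neg_I_pi_div_three, ww, Matrix.cons_val_zero,
    Matrix.cons_val_one, Matrix.cons_val_two, Matrix.head_cons, Matrix.tail_cons]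
  push_cast
  linear_combination (-(1 / 4) * I) * ofReal_sqrt_three_sq - (3 / 4 * (Real.sqrt 3 : ℂ)) * I_sq

lemma sum_phase_mul_ww_snd : ∑ ν, phase ν * (ww ν).2 = -(3 / 2) * Complex.exp (-I * (π / 3)) := by
  obtain ⟨p0, p1, p2⟩ := phase_values
  simp only [Fin.sum_univ_three, p0, p1, p2, exp_neg_I_pi_div_three, ww, Matrix.cons_val_zero,
    Matrix.cons_val_one, Matrix.cons_val_two, Matrix.head_cons, Matrix.tail_cons]
  push_cast
  ring

lemma sum_phase_mul_quadForm_ee (a b c d : ℝ) :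
    ∑ ν, phase ν * (((ee ν).1 * ((ee ν).1 * a + (ee ν).2 * b)
        + (ee ν).2 * ((ee ν).1 * c + (ee ν).2 * d) : ℝ) : ℂ)
      = (3 / 4) * Complex.exp (-I * (π / 3)) * ((a - d) + I * (b + c)) := by
  obtain ⟨p0, p1, p2⟩ := phase_values
  simp only [Fin.sum_univ_three, p0, p1, p2, exp_neg_I_pi_div_three, ee, Matrix.cons_val_zero,
    Matrix.cons_val_one, Matrix.cons_val_two, Matrix.head_cons, Matrix.tail_cons]
  push_cast
  linear_combination (a * (1 / 2 - Real.sqrt 3 / 2 * I) / 4 + I * (b + c) / 8) * ofReal_sqrt_three_sq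
    + (3 * Real.sqrt 3 * (b + c) / 8) * I_sq

lemma sum_phase_mul_fstrain (u : ℝ × ℝ → ℝ × ℝ) (t1 : ℝ) (X : ℝ × ℝ) :
    (t1 : ℂ) * ∑ ν, phase ν * fstrain u ν X
      = (3 / 2) * Complex.exp (-I * (π / 3)) * (-Aone u t1 X + I * Atwo u t1 X) := by
  simp only [fstrain, sum_phase_mul_quadForm_ee, Aone, Atwo]
  push_cast
  ring

lemma conj_phase (ν : Fin 3) :
    starRingEnd ℂ (phase ν) = Complex.exp (-I * ((rdot KK (ww ν) : ℝ) : ℂ)) := by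
  rw [phase, ← Complex.exp_conj]; simp

lemma conj_exp_neg_I_pi_div_three :
    starRingEnd ℂ (Complex.exp (-I * (π / 3))) = Complex.exp (I * (π / 3)) := by
  rw [← Complex.exp_conj]; simp [map_div₀, map_ofNat]

lemma sum_conj_phase_mul_ww_fst :
    ∑ ν, starRingEnd ℂ (phase ν) * (ww ν).1 = (3 / 2) * I * Complex.exp (I * (π / 3)) := by
  have h := congrArg (starRingEnd ℂ) sum_phase_mul_ww_fst
  simp only [map_sum, map_mul, map_neg, map_div₀, map_ofNat, Complex.conj_ofReal, Complex.conj_I,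
    conj_exp_neg_I_pi_div_three] at h
  linear_combination h

lemma sum_conj_phase_mul_ww_snd :
    ∑ ν, starRingEnd ℂ (phase ν) * (ww ν).2 = -(3 / 2) * Complex.exp (I * (π / 3)) := by
  have h := congrArg (starRingEnd ℂ) sum_phase_mul_ww_snd
  simp only [map_sum, map_mul, map_neg, map_div₀, map_ofNat, Complex.conj_ofReal,
    conj_exp_neg_I_pi_div_three] at h
  linear_combination h

lemma sum_conj_phase_mul_fstrain (u : ℝ × ℝ → ℝ × ℝ) (t1 : ℝ) (X : ℝ × ℝ) :
    (t1 : ℂ) * ∑ ν, starRingEnd ℂ (phase ν) * fstrain u ν X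
      = (3 / 2) * Complex.exp (I * (π / 3)) * (-Aone u t1 X - I * Atwo u t1 X) := by
  have h := congrArg (starRingEnd ℂ) (sum_phase_mul_fstrain u t1 X)
  simp only [map_mul, map_sum, map_add, map_neg, map_div₀, map_ofNat, Complex.conj_ofReal,
    Complex.conj_I, conj_exp_neg_I_pi_div_three] at h
  linear_combination h

lemma HeffA_eq (u : ℝ × ℝ → ℝ × ℝ) (t1 : ℝ) (ΦA ΦB : ℝ × ℝ → ℂ) (X : ℝ × ℝ) :
    HeffA u t1 ΦA ΦB X = (∑ ν, phase ν * (ww ν).1) * pdx ΦB X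
      + (∑ ν, phase ν * (ww ν).2) * pdy ΦB X + (t1 * ∑ ν, phase ν * fstrain u ν X) * ΦB X := by
  simp only [HeffA, phase, Fin.sum_univ_three]; ring

lemma HeffB_eq (u : ℝ × ℝ → ℝ × ℝ) (t1 : ℝ) (ΦA ΦB : ℝ × ℝ → ℂ) (X : ℝ × ℝ) :
    HeffB u t1 ΦA ΦB X = -(∑ ν, starRingEnd ℂ (phase ν) * (ww ν).1) * pdx ΦA X
      - (∑ ν, starRingEnd ℂ (phase ν) * (ww ν).2) * pdy ΦA X
      + (t1 * ∑ ν, starRingEnd ℂ (phase ν) * fstrain u ν X) * ΦA X := by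
  simp only [HeffB, ← conj_phase, Fin.sum_univ_three]; ring

lemma exp_mul_pi_div_six_sq (z : ℂ) :
    Complex.exp (z * (π / 6)) ^ 2 = Complex.exp (z * (π / 3)) := by
  rw [← Complex.exp_nat_mul]; ring_nf

theorem heff_unitarily_equivalent_magnetic_dirac_general
    (u : ℝ × ℝ → ℝ × ℝ) (t1 : ℝ)
    (ΦA ΦB : ℝ × ℝ → ℂ) (X : ℝ × ℝ) :
    HeffA u t1 ΦA ΦB X
        = Complex.exp (-I * (π / 6)) *
            DiracA_A u t1 (fun Y => Complex.exp (I * (π / 6)) * ΦA Y)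
              (fun Y => Complex.exp (-I * (π / 6)) * ΦB Y) X ∧
      HeffB u t1 ΦA ΦB X
        = Complex.exp (I * (π / 6)) *
            DiracA_B u t1 (fun Y => Complex.exp (I * (π / 6)) * ΦA Y)
              (fun Y => Complex.exp (-I * (π / 6)) * ΦB Y) X := by
  constructor
  · rw [HeffA_eq, sum_phase_mul_ww_fst, sum_phase_mul_ww_snd, sum_phase_mul_fstrain,
      ← exp_mul_pi_div_six_sq]
    simp only [DiracA_A, pdx_const_mul, pdy_const_mul]
    ring
  · rw [HeffB_eq, sum_conj_phase_mul_ww_fst, sum_conj_phase_mul_ww_snd, sum_conj_phase_mul_fstrain,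
      ← exp_mul_pi_div_six_sq]
    simp only [DiracA_B, pdx_const_mul, pdy_const_mul]
    ring

/-- The effective Hamiltonian `H_eff` is unitarily equivalent to the magnetic
Dirac operator `𝒟_A` via the constant unitary matrix `U = diag(e^{−iπ/6}, e^{iπ/6})`:
for every C¹ displacement `u`, every C¹ envelope `Φ = (Φ^A, Φ^B)` and every point `X`,
`(H_eff Φ)(X) = U · (𝒟_A (U* Φ))(X)`. -/
theorem heff_unitarily_equivalent_magnetic_dirac
    (u : ℝ × ℝ → ℝ × ℝ) (hu : ContDiff ℝ 1 u) (t1 : ℝ)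
    (ΦA ΦB : ℝ × ℝ → ℂ) (hΦA : ContDiff ℝ 1 ΦA) (hΦB : ContDiff ℝ 1 ΦB) (X : ℝ × ℝ) :
    HeffA u t1 ΦA ΦB X
        = Complex.exp (-I * (π / 6)) *
            DiracA_A u t1 (fun Y => Complex.exp (I * (π / 6)) * ΦA Y)
              (fun Y => Complex.exp (-I * (π / 6)) * ΦB Y) X ∧
      HeffB u t1 ΦA ΦB X
        = Complex.exp (I * (π / 6)) *
            DiracA_B u t1 (fun Y => Complex.exp (I * (π / 6)) * ΦA Y)
              (fun Y => Complex.exp (-I * (π / 6)) * ΦB Y) X :=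
  heff_unitarily_equivalent_magnetic_dirac_general u t1 ΦA ΦB X
end
end

section
/- Let A be a constant real 2×2 matrix with two real eigenvalues λ₁ < λ₂ and corresponding nonzero eigenvectors p₁, p₂ ∈ ℝ² (A pᵢ = λᵢ pᵢ). Let R : [0,∞) → ℝ^{2×2} be continuous with ∫₀^∞ ‖R(t)‖ dt < ∞. Then for each i ∈ {1,2} there exists a continuously differentiable solution φᵢ : [0,∞) → ℝ² of the linear system φ′(t) = (A + R(t)) φ(t) such that lim_{t→∞} e^{−λᵢ t} φᵢ(t) = pᵢ. In particular, the perturbed system has solutions with the same leading asymptotic behavior at infinity as the unperturbed constant-coefficient system. -/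
noncomputable section

open Real MeasureTheory Filter

/-- A fixed matrix norm on real 2×2 matrices (sum of absolute values of the entries). -/
def matNorm (M : Matrix (Fin 2) (Fin 2) ℝ) : ℝ := ∑ i : Fin 2, ∑ j : Fin 2, |M i j|

lemma matNorm_nonneg (M : Matrix (Fin 2) (Fin 2) ℝ) : 0 ≤ matNorm M := by
  unfold matNorm; positivity

lemma abs_mulVec_le (M : Matrix (Fin 2) (Fin 2) ℝ) (v : Fin 2 → ℝ) (j : Fin 2) :
    |M.mulVec v j| ≤ matNorm M * ‖v‖ := by
  have h1 : |M.mulVec v j| ≤ ∑ k : Fin 2, |M j k| * ‖v‖ := by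
    show |∑ k : Fin 2, M j k * v k| ≤ _
    refine (Finset.abs_sum_le_sum_abs _ _).trans ?_
    refine Finset.sum_le_sum fun k _ => ?_
    rw [abs_mul]
    exact mul_le_mul_of_nonneg_left (norm_le_pi_norm v k) (abs_nonneg _)
  refine h1.trans ?_
  rw [← Finset.sum_mul]
  apply mul_le_mul_of_nonneg_right _ (norm_nonneg _)
  unfold matNorm
  exact Finset.single_le_sum (f := fun i => ∑ k : Fin 2, |M i k|)
    (fun i _ => by positivity) (Finset.mem_univ j)

lemma matNorm_mul_le (M N : Matrix (Fin 2) (Fin 2) ℝ) :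
    matNorm (M * N) ≤ matNorm M * matNorm N := by
  unfold matNorm
  calc ∑ i : Fin 2, ∑ j : Fin 2, |(M * N) i j|
      ≤ ∑ i : Fin 2, ∑ j : Fin 2, ∑ k : Fin 2, |M i k| * |N k j| := by
        refine Finset.sum_le_sum fun i _ => Finset.sum_le_sum fun j _ => ?_
        rw [Matrix.mul_apply]
        refine (Finset.abs_sum_le_sum_abs _ _).trans ?_
        exact Finset.sum_le_sum fun k _ => le_of_eq (abs_mul _ _)
    _ = ∑ i : Fin 2, ∑ k : Fin 2, |M i k| * ∑ j : Fin 2, |N k j| := by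
        refine Finset.sum_congr rfl fun i _ => ?_
        rw [Finset.sum_comm]
        exact Finset.sum_congr rfl fun k _ => (Finset.mul_sum _ _ _).symm
    _ ≤ ∑ i : Fin 2, ∑ k : Fin 2, |M i k| * (∑ k' : Fin 2, ∑ j : Fin 2, |N k' j|) := by
        refine Finset.sum_le_sum fun i _ => Finset.sum_le_sum fun k _ => ?_
        refine mul_le_mul_of_nonneg_left ?_ (abs_nonneg _)
        exact Finset.single_le_sum (f := fun k' => ∑ j : Fin 2, |N k' j|)
          (fun _ _ => by positivity) (Finset.mem_univ k)
    _ = _ := by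
        simp only [← Finset.sum_mul]

/-- splitting a tail integral -/
lemma tail_split {q : ℝ → ℝ} {a b : ℝ} (hab : a ≤ b)
    (hq : IntegrableOn q (Set.Ioi a)) :
    ∫ s in Set.Ioi a, q s = (∫ s in a..b, q s) + ∫ s in Set.Ioi b, q s := by
  rw [intervalIntegral.integral_of_le hab, ← Set.Ioc_union_Ioi_eq_Ioi hab,
    MeasureTheory.setIntegral_union (Set.Ioc_disjoint_Ioi le_rfl) measurableSet_Ioi
      (hq.mono_set Set.Ioc_subset_Ioi_self) (hq.mono_set (Set.Ioi_subset_Ioi hab))]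

/-- The tail integral of an integrable function tends to 0. -/
lemma tail_tendsto {q : ℝ → ℝ} (hq : Integrable q) :
    Tendsto (fun t => ∫ s in Set.Ioi t, q s) atTop (nhds 0) := by
  have h0 : Tendsto (fun t => ∫ s in (0:ℝ)..t, q s) atTop (nhds (∫ s in Set.Ioi 0, q s)) :=
    intervalIntegral_tendsto_integral_Ioi 0 hq.integrableOn tendsto_id
  have h1 : ∀ᶠ t in atTop, (∫ s in Set.Ioi 0, q s) - (∫ s in (0:ℝ)..t, q s)
      = ∫ s in Set.Ioi t, q s := by
    filter_upwards [eventually_ge_atTop (0:ℝ)] with t ht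
    rw [tail_split ht hq.integrableOn]; ring
  have h2 := (tendsto_const_nhds (x := ∫ s in Set.Ioi 0, q s)).sub h0
  rw [sub_self] at h2
  exact h2.congr' h1

section Core

variable (d : Fin 2 → ℝ) (i : Fin 2)
variable (S : ℝ → Matrix (Fin 2) (Fin 2) ℝ)

set_option maxHeartbeats 2000000 in
theorem core (hdi : d i = 0)
    (hScont : ∀ j k, Continuous fun t => S t j k)
    (hm_int : Integrable (fun t => matNorm (S t)))
    (hsupp : ∀ t, t ≤ -1 → S t = 0) :
    ∃ y : ℝ → Fin 2 → ℝ,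
      (∀ t j, HasDerivAt (fun s => y s j) (d j * y t j + (S t).mulVec (y t) j) t) ∧
      Tendsto y atTop (nhds (fun j => if j = i then 1 else 0)) := by
  set m : ℝ → ℝ := fun t => matNorm (S t) with hm_def
  have hm_cont : Continuous m := by
    apply continuous_finset_sum
    intro j _
    exact continuous_finset_sum _ fun k _ => (hScont j k).abs
  have hm0 : ∀ t, 0 ≤ m t := fun t => matNorm_nonneg _
  have hmz : ∀ t, t ≤ -1 → m t = 0 := by
    intro t ht; simp [hm_def, hsupp t ht, matNorm]
  set g : ℝ → ℝ := fun t => ∫ s in Set.Ioi t, m s with hg_def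
  have hg_int : ∀ t : ℝ, IntegrableOn m (Set.Ioi t) := fun t => hm_int.integrableOn
  have g_split : ∀ a b : ℝ, a ≤ b → g a = (∫ s in a..b, m s) + g b :=
    fun a b hab => tail_split hab (hg_int a)
  have g_nonneg : ∀ t, 0 ≤ g t := fun t =>
    MeasureTheory.setIntegral_nonneg measurableSet_Ioi fun s _ => hm0 s
  have g_anti : Antitone g := by
    intro a b hab
    rw [g_split a b hab]
    have : 0 ≤ ∫ s in a..b, m s := intervalIntegral.integral_nonneg hab fun s _ => hm0 s
    linarith
  have g_deriv : ∀ t, HasDerivAt g (-(m t)) t := by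
    intro t
    have hF : HasDerivAt (fun u => g (t-1) - ∫ s in (t-1)..u, m s) (-(m t)) t := by
      have h1 : HasDerivAt (fun u => ∫ s in (t-1)..u, m s) (m t) t :=
        intervalIntegral.integral_hasDerivAt_right (hm_cont.intervalIntegrable _ _)
          hm_cont.aestronglyMeasurable.stronglyMeasurableAtFilter hm_cont.continuousAt
      simpa using (h1.const_sub (g (t-1)))
    refine hF.congr_of_eventuallyEq ?_
    filter_upwards [Ioi_mem_nhds (show t - 1 < t by linarith)] with u hu
    have := g_split (t-1) u (le_of_lt hu)
    linarith
  have g_cont : Continuous g := continuous_iff_continuousAt.2 fun t => (g_deriv t).continuousAt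
  have g_tendsto : Tendsto g atTop (nhds 0) := tail_tendsto hm_int
  -- choose t₀
  obtain ⟨T, hT⟩ := (eventually_atTop).1 (g_tendsto.eventually
    (eventually_le_nhds (by norm_num : (0:ℝ) < 1/4)))
  set t₀ : ℝ := max T 0 with ht₀_def
  have ht₀0 : (0:ℝ) ≤ t₀ := le_max_right _ _
  have hgt₀ : g t₀ ≤ 1/4 := hT t₀ (le_max_left _ _)
  set Δ : ℝ := |d 0| + |d 1| with hΔ_def
  have hΔ0 : 0 ≤ Δ := by positivity
  have hΔ : ∀ j, |d j| ≤ Δ := by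
    intro j
    have h0 := abs_nonneg (d 0)
    have h1 := abs_nonneg (d 1)
    fin_cases j <;> simp only [Fin.isValue, Fin.zero_eta, Fin.mk_one, hΔ_def] <;> linarith
  set w : ℝ → ℝ := fun t => exp (Δ * (t₀ - min t t₀) + 4 * g (min t t₀)) with hw_def
  have w_pos : ∀ t, 0 < w t := fun t => exp_pos _
  have w1 : ∀ t, 1 ≤ w t := by
    intro t
    rw [hw_def]
    apply one_le_exp
    have h1 : min t t₀ ≤ t₀ := min_le_right _ _
    have h2 : 0 ≤ g (min t t₀) := g_nonneg _
    nlinarith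
  have w_anti : Antitone w := by
    intro a b hab
    apply exp_le_exp.2
    have h1 : min a t₀ ≤ min b t₀ := min_le_min hab le_rfl
    have h2 : g (min b t₀) ≤ g (min a t₀) := g_anti h1
    nlinarith
  have w_cont : Continuous w :=
    Real.continuous_exp.comp (by fun_prop)
  have w_eq : ∀ t, t₀ ≤ t → w t = exp (4 * g t₀) := by
    intro t ht; rw [hw_def]; simp [min_eq_right ht]
  have w_eq' : ∀ t, t ≤ t₀ → w t = exp (Δ * (t₀ - t) + 4 * g t) := by
    intro t ht; rw [hw_def]; simp [min_eq_left ht]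
  have w₀_le : exp (4 * g t₀) ≤ exp 1 := by
    apply exp_le_exp.2; linarith
  have w_prod : ∀ t, t ≤ t₀ → w t = exp (Δ * (t₀ - t)) * exp (4 * g t) := by
    intro t ht; rw [w_eq' t ht, exp_add]
  have Em : ∀ a b : ℝ, (∫ s in a..b, m s) = g a - g b := by
    intro a b
    rcases le_total a b with h | h
    · have := g_split a b h; linarith
    · have := g_split b a h
      rw [intervalIntegral.integral_symm]
      linarith
  have e4_cont : Continuous (fun s => m s * exp (4 * g s)) :=
    hm_cont.mul (Real.continuous_exp.comp (continuous_const.mul g_cont))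
  have E4 : ∀ a b : ℝ, (∫ s in a..b, m s * exp (4 * g s))
      = (exp (4 * g a) - exp (4 * g b))/4 := by
    intro a b
    have hder : ∀ s ∈ Set.uIcc a b, HasDerivAt (fun x => -(exp (4 * g x))/4)
        (m s * exp (4 * g s)) s := by
      intro s _
      have h1 : HasDerivAt (fun x => 4 * g x) (4 * -(m s)) s := (g_deriv s).const_mul 4
      have h3 := (h1.exp.fun_neg).div_const 4
      refine HasDerivAt.congr_deriv h3 (Eq.symm ?_)
      ring
    rw [intervalIntegral.integral_eq_sub_of_hasDerivAt hder
      (e4_cont.intervalIntegrable _ _)]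
    ring
  have mw_cont : Continuous (fun s => m s * w s) := hm_cont.mul w_cont
  have mw_nonneg : ∀ s, 0 ≤ m s * w s := fun s => mul_nonneg (hm0 s) (w_pos s).le
  have mw_int : Integrable (fun s => m s * w s) := by
    refine (hm_int.const_mul (w (-1))).mono' mw_cont.aestronglyMeasurable ?_
    refine Filter.Eventually.of_forall fun s => ?_
    rw [Real.norm_eq_abs, abs_of_nonneg (mw_nonneg s)]
    rcases le_total s (-1) with h | h
    · rw [hmz s h]; simp [mul_nonneg (w_pos (-1)).le (hm0 s)]
    · have := w_anti h
      nlinarith [hm0 s, w_pos s]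
  -- tail estimate (case A)
  have tail_t₀ : ∀ t, t₀ ≤ t → (∫ s in Set.Ioi t, m s * w s) = g t * exp (4 * g t₀) := by
    intro t h
    have hcongr : ∀ s ∈ Set.Ioi t, m s * w s = m s * exp (4 * g t₀) := by
      intro s hs
      rw [w_eq s (le_trans h (le_of_lt hs))]
    rw [MeasureTheory.setIntegral_congr_fun measurableSet_Ioi hcongr,
      MeasureTheory.integral_mul_const]
  have tail_mw : ∀ t, (∫ s in Set.Ioi t, m s * w s) ≤ w t / 2 := by
    intro t
    rcases le_total t₀ t with h | h
    · rw [tail_t₀ t h, w_eq t h]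
      have hgt : g t ≤ 1/4 := le_trans (g_anti h) hgt₀
      nlinarith [exp_pos (4 * g t₀), g_nonneg t]
    · rw [tail_split h (mw_int.integrableOn)]
      have h1 : (∫ s in t..t₀, m s * w s)
          ≤ exp (Δ * (t₀ - t)) * ((exp (4 * g t) - exp (4 * g t₀))/4) := by
        have hmono : (∫ s in t..t₀, m s * w s)
            ≤ ∫ s in t..t₀, exp (Δ * (t₀ - t)) * (m s * exp (4 * g s)) := by
          apply intervalIntegral.integral_mono_on h (mw_cont.intervalIntegrable _ _)
            ((continuous_const.mul e4_cont).intervalIntegrable _ _)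
          intro s hs
          rw [w_prod s hs.2]
          have he : exp (Δ * (t₀ - s)) ≤ exp (Δ * (t₀ - t)) := by
            apply exp_le_exp.2
            nlinarith [hs.1]
          have hms : 0 ≤ m s * rexp (4 * g s) := mul_nonneg (hm0 s) (exp_pos _).le
          simp only [Pi.mul_apply]
          nlinarith [mul_le_mul_of_nonneg_right he hms]
        rwa [intervalIntegral.integral_const_mul, E4] at hmono
      have h2 : (∫ s in Set.Ioi t₀, m s * w s) ≤ exp (4 * g t₀) / 4 := by
        rw [tail_t₀ t₀ le_rfl]
        nlinarith [exp_pos (4 * g t₀)]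
      rw [w_prod t h]
      have hA : 1 ≤ exp (Δ * (t₀ - t)) := one_le_exp (by nlinarith)
      have hX : exp (4 * g t₀) ≤ exp (4 * g t) := exp_le_exp.2 (by nlinarith [g_anti h])
      have hX1 : 1 ≤ exp (4 * g t₀) := one_le_exp (by nlinarith [g_nonneg t₀])
      nlinarith
  -- forward estimates (case B)
  have fwd_est : ∀ t, t₀ ≤ t → (∫ s in t₀..t, m s * w s) ≤ w t / 4 := by
    intro t h
    have hcongr : Set.EqOn (fun s => m s * w s) (fun s => m s * exp (4 * g t₀))
        (Set.uIcc t₀ t) := by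
      intro s hs
      rw [Set.uIcc_of_le h] at hs
      simp only
      rw [w_eq s hs.1]
    rw [intervalIntegral.integral_congr hcongr, intervalIntegral.integral_mul_const, Em,
      w_eq t h]
    have := g_anti h
    nlinarith [exp_pos (4 * g t₀), g_nonneg t]
  have fwd_est2 : ∀ t, t ≤ t₀ →
      (∫ s in t..t₀, exp (Δ * (s - t)) * (m s * w s)) ≤ w t / 4 := by
    intro t h
    have hcongr : Set.EqOn (fun s => exp (Δ * (s - t)) * (m s * w s))
        (fun s => exp (Δ * (t₀ - t)) * (m s * exp (4 * g s))) (Set.uIcc t t₀) := by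
      intro s hs
      rw [Set.uIcc_of_le h] at hs
      simp only
      rw [w_prod s hs.2,
        show exp (Δ * (s - t)) * (m s * (exp (Δ * (t₀ - s)) * exp (4 * g s)))
          = (exp (Δ * (s - t)) * exp (Δ * (t₀ - s))) * (m s * exp (4 * g s)) from by ring,
        ← exp_add, show Δ * (s - t) + Δ * (t₀ - s) = Δ * (t₀ - t) from by ring]
    rw [intervalIntegral.integral_congr hcongr, intervalIntegral.integral_const_mul, E4,
      w_prod t h]
    nlinarith [exp_pos (Δ * (t₀ - t)), exp_pos (4 * g t), exp_pos (4 * g t₀),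
      one_le_exp (by nlinarith [g_nonneg t₀] : 0 ≤ 4 * g t₀)]
  -- the integral operator ingredients
  have mulVec_cont : ∀ (v : ℝ → Fin 2 → ℝ), (∀ k, Continuous fun s => v s k) →
      ∀ j, Continuous fun s => (S s).mulVec (v s) j := by
    intro v hv j
    show Continuous fun s => ∑ k : Fin 2, S s j k * v s k
    exact continuous_finset_sum _ fun k _ => (hScont j k).mul (hv k)
  set X := BoundedContinuousFunction ℝ (Fin 2 → ℝ) with hX_def
  set cv : Fin 2 → ℝ := fun j => if j = i then 1 else 0 with hcv_def
  set bb : X → Fin 2 → ℝ → ℝ :=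
    fun u j s => exp (-(d j) * s) * (S s).mulVec (w s • ⇑u s) j with hbb_def
  have bb_cont : ∀ u j, Continuous (bb u j) := by
    intro u j
    apply (Real.continuous_exp.comp (continuous_const.mul continuous_id)).mul
    exact mulVec_cont _ (fun k => (w_cont.mul ((continuous_apply k).comp u.continuous))) j
  have bb_bound : ∀ u j s, |bb u j s| ≤ exp (-(d j) * s) * (m s * w s * ‖u‖) := by
    intro u j s
    rw [hbb_def]
    simp only [abs_mul, abs_of_pos (exp_pos _)]
    apply mul_le_mul_of_nonneg_left _ (exp_pos _).le
    refine (abs_mulVec_le _ _ _).trans ?_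
    have h1 : ‖w s • ⇑u s‖ ≤ w s * ‖u‖ := by
      rw [norm_smul, Real.norm_eq_abs, abs_of_pos (w_pos s)]
      exact mul_le_mul_of_nonneg_left (u.norm_coe_le_norm s) (w_pos s).le
    have := mul_le_mul_of_nonneg_left h1 (hm0 s)
    calc m s * ‖w s • ⇑u s‖ ≤ m s * (w s * ‖u‖) := this
      _ = m s * w s * ‖u‖ := by ring
  have bb_zero : ∀ u j s, s ≤ (-1:ℝ) → bb u j s = 0 := by
    intro u j s hs
    rw [hbb_def]
    simp [hsupp s hs]
  have bb_int : ∀ u j, 0 ≤ d j → Integrable (bb u j) := by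
    intro u j hdj
    refine (hm_int.const_mul (exp (d j) * w (-1) * ‖u‖)).mono'
      (bb_cont u j).aestronglyMeasurable ?_
    refine Filter.Eventually.of_forall fun s => ?_
    rw [Real.norm_eq_abs]
    rcases le_total s (-1) with h | h
    · rw [bb_zero u j s h, abs_zero]
      have : 0 ≤ m s := hm0 s
      have : (0:ℝ) ≤ exp (d j) * w (-1) * ‖u‖ :=
        mul_nonneg (mul_nonneg (exp_pos _).le (w_pos _).le) (norm_nonneg _)
      nlinarith
    · refine (bb_bound u j s).trans ?_
      have h1 : exp (-(d j) * s) ≤ exp (d j) := by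
        apply exp_le_exp.2; nlinarith
      have h2 : w s ≤ w (-1) := w_anti h
      have hm := hm0 s
      have hu := norm_nonneg u
      have hw := (w_pos s).le
      have he := (exp_pos (-(d j) * s)).le
      have he' := (exp_pos (d j)).le
      nlinarith [mul_le_mul h1 (mul_le_mul_of_nonneg_left h2 hm) (by nlinarith) he',
        mul_nonneg (mul_nonneg he' (mul_nonneg hm (w_pos (-1)).le)) hu]
  set prim : X → Fin 2 → ℝ → ℝ := fun u j t => ∫ s in t₀..t, bb u j s with hprim_def
  set BB : X → Fin 2 → ℝ := fun u j =>
    if 0 ≤ d j then -(∫ s in Set.Ioi t₀, bb u j s) else 0 with hBB_def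
  set Tf : X → Fin 2 → ℝ → ℝ :=
    fun u j t => cv j + exp (d j * t) * (BB u j + prim u j t) with hTf_def
  have prim_deriv : ∀ u j t, HasDerivAt (fun τ => prim u j τ) (bb u j t) t := by
    intro u j t
    exact intervalIntegral.integral_hasDerivAt_right
      ((bb_cont u j).intervalIntegrable _ _)
      (bb_cont u j).aestronglyMeasurable.stronglyMeasurableAtFilter
      (bb_cont u j).continuousAt
  have caseA_eq : ∀ u j, 0 ≤ d j → ∀ t,
      BB u j + prim u j t = -(∫ s in Set.Ioi t, bb u j s) := by
    intro u j hdj t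
    rw [hBB_def]
    simp only [if_pos hdj]
    rcases le_total t₀ t with h | h
    · have hsplit := tail_split h ((bb_int u j hdj).integrableOn)
      rw [hprim_def]
      simp only
      linear_combination -hsplit
    · have hsplit := tail_split h ((bb_int u j hdj).integrableOn)
      rw [hprim_def]
      simp only
      rw [intervalIntegral.integral_symm]
      linear_combination hsplit
  -- the key estimate
  have keyEst : ∀ (u : X) (j : Fin 2) (t : ℝ),
      |exp (d j * t) * (BB u j + prim u j t)| ≤ ‖u‖ / 2 * w t := by
    intro u j t
    rcases le_or_gt 0 (d j) with hdj | hdj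
    · rw [caseA_eq u j hdj t, mul_neg, abs_neg, ← MeasureTheory.integral_const_mul]
      have hbd : ∀ s ∈ Set.Ioi t, ‖exp (d j * t) * bb u j s‖ ≤ m s * w s * ‖u‖ := by
        intro s hs
        rw [Real.norm_eq_abs, abs_mul, abs_of_pos (exp_pos _)]
        refine le_trans (mul_le_mul_of_nonneg_left (bb_bound u j s) (exp_pos _).le) ?_
        rw [← mul_assoc, ← exp_add]
        have h1 : exp (d j * t + -(d j) * s) ≤ 1 := by
          rw [exp_le_one_iff]
          have : t ≤ s := le_of_lt hs
          nlinarith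
        nlinarith [mul_nonneg (mul_nonneg (hm0 s) (w_pos s).le) (norm_nonneg u),
          (exp_pos (d j * t + -(d j) * s)).le]
      have hInt : Integrable (fun s => m s * w s * ‖u‖)
          (volume.restrict (Set.Ioi t)) :=
        ((mw_int.mul_const ‖u‖)).integrableOn
      have := MeasureTheory.norm_integral_le_of_norm_le hInt
        ((MeasureTheory.ae_restrict_iff' measurableSet_Ioi).2
          (Filter.Eventually.of_forall hbd))
      rw [Real.norm_eq_abs] at this
      refine this.trans ?_
      rw [MeasureTheory.integral_mul_const]
      have := tail_mw t
      nlinarith [norm_nonneg u]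
    · rw [hBB_def]
      simp only [if_neg (not_le.2 hdj), zero_add]
      rcases le_total t₀ t with h | h
      · have step1 : |exp (d j * t) * prim u j t|
            ≤ ∫ s in t₀..t, m s * w s * ‖u‖ := by
          rw [hprim_def]
          simp only
          rw [← intervalIntegral.integral_const_mul]
          refine (intervalIntegral.abs_integral_le_integral_abs h).trans ?_
          apply intervalIntegral.integral_mono_on h
            (((continuous_const.mul (bb_cont u j)).abs).intervalIntegrable _ _)
            ((mw_cont.mul continuous_const).intervalIntegrable _ _)
          intro s hs
          simp only [Pi.mul_apply]
          rw [abs_mul, abs_of_pos (exp_pos _)]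
          refine le_trans (mul_le_mul_of_nonneg_left (bb_bound u j s) (exp_pos _).le) ?_
          rw [← mul_assoc, ← exp_add]
          have h1 : exp (d j * t + -(d j) * s) ≤ 1 := by
            rw [exp_le_one_iff]
            nlinarith [hs.2]
          nlinarith [mul_nonneg (mul_nonneg (hm0 s) (w_pos s).le) (norm_nonneg u),
            (exp_pos (d j * t + -(d j) * s)).le]
        refine step1.trans ?_
        rw [intervalIntegral.integral_mul_const]
        nlinarith [fwd_est t h, norm_nonneg u, w_pos t]
      · have step1 : |exp (d j * t) * prim u j t|
            ≤ ∫ s in t..t₀, exp (Δ * (s - t)) * (m s * w s) * ‖u‖ := by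
          rw [hprim_def]
          simp only
          rw [intervalIntegral.integral_symm, mul_neg, abs_neg,
            ← intervalIntegral.integral_const_mul]
          refine (intervalIntegral.abs_integral_le_integral_abs h).trans ?_
          have hcontg : Continuous (fun s => exp (Δ * (s - t)) * (m s * w s) * ‖u‖) := by
            exact ((Real.continuous_exp.comp (continuous_const.mul
              (continuous_id.sub continuous_const))).mul mw_cont).mul continuous_const
          apply intervalIntegral.integral_mono_on h
            (((continuous_const.mul (bb_cont u j)).abs).intervalIntegrable _ _)
            (hcontg.intervalIntegrable _ _)
          intro s hs
          simp only [Pi.mul_apply]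
          rw [abs_mul, abs_of_pos (exp_pos _)]
          refine le_trans (mul_le_mul_of_nonneg_left (bb_bound u j s) (exp_pos _).le) ?_
          rw [← mul_assoc, ← exp_add]
          have h1 : exp (d j * t + -(d j) * s) ≤ exp (Δ * (s - t)) := by
            apply exp_le_exp.2
            have habs : -(d j) ≤ Δ := le_trans (neg_le_abs (d j)) (hΔ j)
            nlinarith [hs.1]
          nlinarith [mul_nonneg (mul_nonneg (hm0 s) (w_pos s).le) (norm_nonneg u),
            (exp_pos (d j * t + -(d j) * s)).le, (exp_pos (Δ * (s - t))).le,
            mul_nonneg (hm0 s) (w_pos s).le]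
        refine step1.trans ?_
        rw [intervalIntegral.integral_mul_const]
        nlinarith [fwd_est2 t h, norm_nonneg u, w_pos t]
  -- continuity of the operator output
  have prim_cont : ∀ u j, Continuous (fun t => prim u j t) := by
    intro u j
    exact continuous_iff_continuousAt.2 fun t => (prim_deriv u j t).continuousAt
  have Tf_cont : ∀ u j, Continuous (fun t => Tf u j t) := by
    intro u j
    rw [hTf_def]
    simp only
    exact continuous_const.add ((Real.continuous_exp.comp
      (continuous_const.mul continuous_id)).mul (continuous_const.add (prim_cont u j)))
  have cv_abs : ∀ j, |cv j| ≤ 1 := by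
    intro j
    rw [hcv_def]
    dsimp only
    split <;> norm_num
  have Tf_bound : ∀ u j t, |Tf u j t| ≤ 1 + ‖u‖/2 * w t := by
    intro u j t
    rw [hTf_def]
    simp only
    refine (abs_add_le _ _).trans ?_
    have := keyEst u j t
    have := cv_abs j
    linarith
  have winv_le_one : ∀ t, (w t)⁻¹ ≤ 1 := by
    intro t
    rw [inv_le_one_iff₀]
    right; exact w1 t
  have winv_pos : ∀ t, 0 < (w t)⁻¹ := fun t => inv_pos.2 (w_pos t)
  -- the operator
  set Φ : X → X := fun u => BoundedContinuousFunction.ofNormedAddCommGroup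
    (fun t => fun j => (w t)⁻¹ * Tf u j t)
    (continuous_pi fun j => (w_cont.inv₀ (fun t => (w_pos t).ne')).mul (Tf_cont u j))
    (1 + ‖u‖/2)
    (by
      intro t
      rw [pi_norm_le_iff_of_nonneg (by positivity)]
      intro j
      rw [Real.norm_eq_abs, abs_mul, abs_of_pos (winv_pos t)]
      have h1 := Tf_bound u j t
      have h2 := winv_le_one t
      have h3 : (w t)⁻¹ * w t = 1 := inv_mul_cancel₀ (w_pos t).ne'
      have h4 := winv_pos t
      have h5 : |Tf u j t| ≤ (1 + ‖u‖/2 * w t) := h1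
      have h6 : (w t)⁻¹ * |Tf u j t| ≤ (w t)⁻¹ * (1 + ‖u‖/2 * w t) :=
        mul_le_mul_of_nonneg_left h5 h4.le
      have h7 : (w t)⁻¹ * (1 + ‖u‖/2 * w t) = (w t)⁻¹ + ‖u‖/2 * ((w t)⁻¹ * w t) := by ring
      rw [h7, h3] at h6
      linarith) with hΦ_def
  have Φ_apply : ∀ u t j, (Φ u) t j = (w t)⁻¹ * Tf u j t := by
    intro u t j
    rw [hΦ_def]
    rfl
  -- linearity of differences
  have bb_sub : ∀ (u v : X) j s, bb (u - v) j s = bb u j s - bb v j s := by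
    intro u v j s
    have hx : (u - v) s = u s - v s := rfl
    rw [hbb_def]
    simp only
    rw [hx, smul_sub, Matrix.mulVec_sub]
    simp only [Pi.sub_apply]
    ring
  have prim_sub : ∀ (u v : X) j t, prim (u - v) j t = prim u j t - prim v j t := by
    intro u v j t
    rw [hprim_def]
    simp only
    rw [← intervalIntegral.integral_sub ((bb_cont u j).intervalIntegrable _ _)
      ((bb_cont v j).intervalIntegrable _ _)]
    apply intervalIntegral.integral_congr
    intro s _
    exact bb_sub u v j s
  have BB_sub : ∀ (u v : X) j, BB (u - v) j = BB u j - BB v j := by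
    intro u v j
    rw [hBB_def]
    simp only
    split
    · next hdj =>
      have hI : (∫ s in Set.Ioi t₀, bb (u - v) j s)
          = (∫ s in Set.Ioi t₀, bb u j s) - ∫ s in Set.Ioi t₀, bb v j s := by
        rw [← MeasureTheory.integral_sub ((bb_int u j hdj).restrict)
          ((bb_int v j hdj).restrict)]
        apply MeasureTheory.integral_congr_ae
        exact Filter.Eventually.of_forall fun s => bb_sub u v j s
      rw [hI]
      ring
    · ring
  have Tf_sub : ∀ (u v : X) j t,
      Tf u j t - Tf v j t = exp (d j * t) * (BB (u - v) j + prim (u - v) j t) := by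
    intro u v j t
    rw [BB_sub, prim_sub, hTf_def]
    simp only
    ring
  -- contraction
  have hcontr : ContractingWith (1/2 : NNReal) Φ := by
    constructor
    · exact NNReal.half_lt_self one_ne_zero
    · apply LipschitzWith.of_dist_le_mul
      intro u v
      rw [BoundedContinuousFunction.dist_le (by positivity)]
      intro t
      rw [dist_pi_le_iff (by positivity)]
      intro j
      rw [Real.dist_eq, Φ_apply, Φ_apply, ← mul_sub, abs_mul, abs_of_pos (winv_pos t)]
      have h1 : |Tf u j t - Tf v j t| ≤ ‖u - v‖/2 * w t := by
        rw [Tf_sub]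
        exact keyEst (u - v) j t
      have h2 : (w t)⁻¹ * |Tf u j t - Tf v j t| ≤ (w t)⁻¹ * (‖u - v‖/2 * w t) :=
        mul_le_mul_of_nonneg_left h1 (winv_pos t).le
      have h3 : (w t)⁻¹ * (‖u - v‖/2 * w t) = ‖u - v‖/2 * ((w t)⁻¹ * w t) := by ring
      rw [h3, inv_mul_cancel₀ (w_pos t).ne', mul_one] at h2
      refine h2.trans (le_of_eq ?_)
      rw [dist_eq_norm]
      push_cast
      ring
  have hne : Nonempty X := ⟨0⟩
  set ustar : X := ContractingWith.fixedPoint Φ hcontr with hustar_def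
  have hfix : Φ ustar = ustar := hcontr.fixedPoint_isFixedPt
  set y : ℝ → Fin 2 → ℝ := fun t => w t • ⇑ustar t with hy_def
  have y_eq : ∀ t j, y t j = Tf ustar j t := by
    intro t j
    have h1 : (Φ ustar) t j = ustar t j := by rw [hfix]
    rw [Φ_apply] at h1
    rw [hy_def]
    simp only [Pi.smul_apply, smul_eq_mul]
    rw [← h1, ← mul_assoc, mul_inv_cancel₀ (w_pos t).ne', one_mul]
  have bb_y : ∀ j s, bb ustar j s = exp (-(d j) * s) * (S s).mulVec (y s) j := fun j s => rfl
  refine ⟨y, ?_, ?_⟩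
  · -- the ODE
    intro t j
    have heq : (fun s => y s j) = fun s => cv j + exp (d j * s) * (BB ustar j + prim ustar j s) := by
      funext s
      rw [y_eq s j, hTf_def]
    rw [heq]
    have h1 : HasDerivAt (fun s : ℝ => exp (d j * s)) (d j * exp (d j * t)) t := by
      have h0 := ((hasDerivAt_id t).const_mul (d j)).exp
      simp only [id_eq, mul_one] at h0
      convert h0 using 1
      ring
    have h2 : HasDerivAt (fun s => BB ustar j + prim ustar j s) (bb ustar j t) t :=
      (prim_deriv ustar j t).const_add _
    have h3 := (h1.fun_mul h2).const_add (cv j)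
    refine HasDerivAt.congr_deriv h3 (Eq.symm ?_)
    have hdc : d j * cv j = 0 := by
      rw [hcv_def]
      by_cases hji : j = i
      · simp only [hji, if_pos rfl]
        rw [hdi]
        ring
      · simp [hji]
    have hexp : exp (d j * t) * exp (-(d j) * t) = 1 := by
      rw [← exp_add]
      norm_num
    rw [y_eq t j, hTf_def]
    simp only
    rw [bb_y j t]
    linear_combination hdc - ((S t).mulVec (y t) j) * hexp
  · -- the limit
    rw [tendsto_pi_nhds]
    intro j
    have heq : (fun t => y t j) = fun t => cv j + exp (d j * t) * (BB ustar j + prim ustar j t) := by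
      funext s
      rw [y_eq s j, hTf_def]
    rw [heq]
    have hE : Tendsto (fun t => exp (d j * t) * (BB ustar j + prim ustar j t)) atTop (nhds 0) := by
      rcases le_or_gt 0 (d j) with hdj | hdj
      · -- backward component
        have hbd : ∀ t, ‖exp (d j * t) * (BB ustar j + prim ustar j t)‖
            ≤ (∫ s in Set.Ioi t, m s * w s) * ‖ustar‖ := by
          intro t
          rw [Real.norm_eq_abs, caseA_eq ustar j hdj t, mul_neg, abs_neg,
            ← MeasureTheory.integral_const_mul]
          have hptw : ∀ s ∈ Set.Ioi t, ‖exp (d j * t) * bb ustar j s‖ ≤ m s * w s * ‖ustar‖ := by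
            intro s hs
            rw [Real.norm_eq_abs, abs_mul, abs_of_pos (exp_pos _)]
            refine le_trans (mul_le_mul_of_nonneg_left (bb_bound ustar j s) (exp_pos _).le) ?_
            rw [← mul_assoc, ← exp_add]
            have h1 : exp (d j * t + -(d j) * s) ≤ 1 := by
              rw [exp_le_one_iff]
              have : t ≤ s := le_of_lt hs
              nlinarith
            nlinarith [mul_nonneg (mul_nonneg (hm0 s) (w_pos s).le) (norm_nonneg ustar),
              (exp_pos (d j * t + -(d j) * s)).le]
          have hInt : Integrable (fun s => m s * w s * ‖ustar‖)
              (volume.restrict (Set.Ioi t)) := ((mw_int.mul_const ‖ustar‖)).integrableOn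
          have hle := MeasureTheory.norm_integral_le_of_norm_le hInt
            ((MeasureTheory.ae_restrict_iff' measurableSet_Ioi).2
              (Filter.Eventually.of_forall hptw))
          refine hle.trans (le_of_eq ?_)
          rw [MeasureTheory.integral_mul_const]
        have htail : Tendsto (fun t => (∫ s in Set.Ioi t, m s * w s) * ‖ustar‖)
            atTop (nhds 0) := by
          have := (tail_tendsto mw_int).mul_const ‖ustar‖
          simpa using this
        exact squeeze_zero_norm hbd htail
      · -- forward component
        rw [hBB_def]
        simp only [if_neg (not_le.2 hdj), zero_add]
        set hfun : ℝ → ℝ := fun t => ∫ s in t₀..t, exp (d j * (t - s)) * (m s * w s) with hh_def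
        have hbd : ∀ t, t₀ ≤ t → ‖exp (d j * t) * prim ustar j t‖ ≤ hfun t * ‖ustar‖ := by
          intro t ht
          rw [Real.norm_eq_abs, hprim_def]
          simp only
          rw [← intervalIntegral.integral_const_mul]
          refine (intervalIntegral.abs_integral_le_integral_abs ht).trans ?_
          rw [hh_def]
          simp only
          rw [← intervalIntegral.integral_mul_const]
          apply intervalIntegral.integral_mono_on ht
            (((continuous_const.mul (bb_cont ustar j)).abs).intervalIntegrable _ _)
            (by
              have hcontg : Continuous (fun s => exp (d j * (t - s)) * (m s * w s) * ‖ustar‖) := by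
                exact ((Real.continuous_exp.comp (continuous_const.mul
                  (continuous_const.sub continuous_id))).mul mw_cont).mul continuous_const
              exact hcontg.intervalIntegrable _ _)
          intro s hs
          simp only [Pi.mul_apply]
          rw [abs_mul, abs_of_pos (exp_pos _)]
          refine le_trans (mul_le_mul_of_nonneg_left (bb_bound ustar j s) (exp_pos _).le) ?_
          rw [← mul_assoc, ← exp_add,
            show d j * t + -(d j) * s = d j * (t - s) from by ring]
          ring_nf
          exact le_refl _
        have hzero : Tendsto hfun atTop (nhds 0) := by
          rw [NormedAddCommGroup.tendsto_nhds_zero]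
          intro ε hε
          obtain ⟨u, hu⟩ := (((tail_tendsto mw_int).eventually
            (Iio_mem_nhds (by linarith : (0:ℝ) < ε/2))).and
            (eventually_ge_atTop t₀)).exists
          obtain ⟨hu_tail, hu_t₀⟩ := hu
          set A : ℝ := ∫ s in t₀..u, m s * w s with hA_def
          have hA0 : 0 ≤ A := intervalIntegral.integral_nonneg hu_t₀ fun s _ => mw_nonneg s
          have hEA : Tendsto (fun t => exp (d j * (t - u)) * A) atTop (nhds 0) := by
            have h1 : Tendsto (fun t : ℝ => d j * (t - u)) atTop atBot := by
              apply Tendsto.const_mul_atTop_of_neg hdj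
              exact tendsto_atTop_add_const_right _ _ tendsto_id
            have h2 := (Real.tendsto_exp_atBot.comp h1).mul_const A
            simpa using h2
          filter_upwards [hEA.eventually (Iio_mem_nhds (by linarith : (0:ℝ) < ε/2)),
            eventually_ge_atTop u] with t h1 h2
          have htt₀ : t₀ ≤ t := le_trans hu_t₀ h2
          have hnn : 0 ≤ hfun t := by
            rw [hh_def]
            apply intervalIntegral.integral_nonneg htt₀
            intro s _
            exact mul_nonneg (exp_pos _).le (mw_nonneg s)
          rw [Real.norm_eq_abs, abs_of_nonneg hnn]
          have hsplit : hfun t = (∫ s in t₀..u, exp (d j * (t - s)) * (m s * w s))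
              + ∫ s in u..t, exp (d j * (t - s)) * (m s * w s) := by
            rw [hh_def]
            exact (intervalIntegral.integral_add_adjacent_intervals
              ((((Real.continuous_exp.comp (continuous_const.mul
                (continuous_const.sub continuous_id))).mul mw_cont)).intervalIntegrable _ _)
              ((((Real.continuous_exp.comp (continuous_const.mul
                (continuous_const.sub continuous_id))).mul mw_cont)).intervalIntegrable _ _)).symm
          have hpart1 : (∫ s in t₀..u, exp (d j * (t - s)) * (m s * w s))
              ≤ exp (d j * (t - u)) * A := by
            rw [hA_def, ← intervalIntegral.integral_const_mul]
            apply intervalIntegral.integral_mono_on hu_t₀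
              (by
                have hcontg : Continuous (fun s => exp (d j * (t - s)) * (m s * w s)) := by
                  exact (Real.continuous_exp.comp (continuous_const.mul
                    (continuous_const.sub continuous_id))).mul mw_cont
                exact hcontg.intervalIntegrable _ _)
              ((continuous_const.mul mw_cont).intervalIntegrable _ _)
            intro s hs
            have hker : exp (d j * (t - s)) ≤ exp (d j * (t - u)) := by
              apply exp_le_exp.2
              nlinarith [hs.2]
            exact mul_le_mul_of_nonneg_right hker (mw_nonneg s)
          have hpart2 : (∫ s in u..t, exp (d j * (t - s)) * (m s * w s))
              ≤ ∫ s in Set.Ioi u, m s * w s := by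
            have step : (∫ s in u..t, exp (d j * (t - s)) * (m s * w s))
                ≤ ∫ s in u..t, m s * w s := by
              apply intervalIntegral.integral_mono_on h2
                (by
                  have hcontg : Continuous (fun s => exp (d j * (t - s)) * (m s * w s)) := by
                    exact (Real.continuous_exp.comp (continuous_const.mul
                      (continuous_const.sub continuous_id))).mul mw_cont
                  exact hcontg.intervalIntegrable _ _)
                (mw_cont.intervalIntegrable _ _)
              intro s hs
              have hker : exp (d j * (t - s)) ≤ 1 := by
                rw [exp_le_one_iff]
                nlinarith [hs.2]
              nlinarith [mw_nonneg s, (exp_pos (d j * (t - s))).le]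
            refine step.trans ?_
            rw [intervalIntegral.integral_of_le h2]
            apply MeasureTheory.setIntegral_mono_set mw_int.integrableOn
              (Filter.Eventually.of_forall fun s => mw_nonneg s)
            exact Filter.Eventually.of_forall fun s hs => hs.1
          linarith [hsplit, hpart1, hpart2]
        apply squeeze_zero_norm' _ (by simpa using hzero.mul_const ‖ustar‖)
        filter_upwards [eventually_ge_atTop t₀] with t ht
        exact hbd t ht
    have hfin := hE.const_add (cv j)
    simpa using hfin




end Core

set_option maxHeartbeats 1000000 in
/-- Let `A` be a constant real 2×2 matrix with real eigenvalues `λ₁ < λ₂` and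
eigenvectors `p₁, p₂`, and let `R : [0,∞) → ℝ^{2×2}` be continuous with
`∫₀^∞ ‖R(t)‖ dt < ∞`. Then for each `i` the perturbed system `φ′ = (A + R(t))φ` has a solution
`φᵢ` on `[0,∞)` with `e^{−λᵢ t} φᵢ(t) → pᵢ` as `t → ∞`. -/
theorem perturbed_linear_system_asymptotics
    (A : Matrix (Fin 2) (Fin 2) ℝ) (lam : Fin 2 → ℝ) (p : Fin 2 → Fin 2 → ℝ)
    (hlam : lam 0 < lam 1)
    (hp : ∀ i, p i ≠ 0)
    (heig : ∀ i, A.mulVec (p i) = lam i • p i)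
    (R : ℝ → Matrix (Fin 2) (Fin 2) ℝ)
    (hRcont : ∀ i j : Fin 2, ContinuousOn (fun t => R t i j) (Set.Ici 0))
    (hRint : IntegrableOn (fun t => matNorm (R t)) (Set.Ici 0)) :
    ∀ i : Fin 2, ∃ φ : ℝ → (Fin 2 → ℝ),
      (∀ t : ℝ, 0 ≤ t → HasDerivAt φ ((A + R t).mulVec (φ t)) t) ∧
      Tendsto (fun t => Real.exp (-(lam i) * t) • φ t) atTop (nhds (p i)) := by
  intro i
  -- the eigenvector matrix
  set P : Matrix (Fin 2) (Fin 2) ℝ := Matrix.of (fun k j => p j k) with hP_def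
  have hPA : A * P = P * Matrix.diagonal lam := by
    ext k j
    have h1 : (A * P) k j = A.mulVec (p j) k := by
      rw [Matrix.mul_apply]
      rfl
    rw [h1, heig j, Matrix.mul_diagonal]
    simp only [Pi.smul_apply, smul_eq_mul, hP_def, Matrix.of_apply]
    ring
  -- linear independence of the eigenvectors
  have hli : LinearIndependent ℝ p := by
    apply Module.End.eigenvectors_linearIndependent' (Matrix.mulVecLin A) lam ?_ p ?_
    · intro a b hab
      by_contra hne
      fin_cases a <;> fin_cases b <;> simp_all
    · intro j
      rw [Module.End.hasEigenvector_iff]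
      refine ⟨Module.End.mem_eigenspace_iff.2 ?_, hp j⟩
      show A.mulVec (p j) = lam j • p j
      exact heig j
  -- invertibility of P
  have hinj : Function.Injective P.mulVec := by
    have hker : ∀ v, P.mulVec v = 0 → v = 0 := by
      intro v hv
      have hsum : ∑ j : Fin 2, v j • p j = 0 := by
        funext k
        have := congr_fun hv k
        rw [show P.mulVec v k = ∑ j : Fin 2, P k j * v j from rfl, Pi.zero_apply] at this
        simp only [Finset.sum_apply, Pi.smul_apply, smul_eq_mul, Pi.zero_apply]
        rw [← this]
        refine Finset.sum_congr rfl fun j _ => ?_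
        simp only [hP_def, Matrix.of_apply]
        ring
      have hz := Fintype.linearIndependent_iff.1 hli v hsum
      funext j
      exact hz j
    intro v1 v2 hv
    have h0 : P.mulVec (v1 - v2) = 0 := by
      rw [Matrix.mulVec_sub, hv, sub_self]
    have := hker _ h0
    exact sub_eq_zero.1 this
  have hunit : IsUnit P := Matrix.mulVec_injective_iff_isUnit.1 hinj
  have hdet : IsUnit P.det := (Matrix.isUnit_iff_isUnit_det P).1 hunit
  have hPPinv : P * P⁻¹ = 1 := Matrix.mul_nonsing_inv P hdet
  have hPinvP : P⁻¹ * P = 1 := Matrix.nonsing_inv_mul P hdet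
  -- the cutoff and the transformed perturbation
  set χ : ℝ → ℝ := fun t => max 0 (min 1 (t + 1)) with hχ_def
  have hχ_cont : Continuous χ :=
    continuous_const.max (continuous_const.min (continuous_id.add continuous_const))
  have hχ1 : ∀ t : ℝ, 0 ≤ t → χ t = 1 := by
    intro t ht
    rw [hχ_def]
    simp only
    rw [min_eq_left (by linarith), max_eq_right (by norm_num)]
  have hχ0 : ∀ t : ℝ, t ≤ -1 → χ t = 0 := by
    intro t ht
    rw [hχ_def]
    simp only
    rw [min_eq_right (by linarith), max_eq_left (by linarith)]
  have hχmem : ∀ t : ℝ, 0 ≤ χ t ∧ χ t ≤ 1 := by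
    intro t
    constructor
    · exact le_max_left _ _
    · rw [hχ_def]
      simp only
      rcases le_total (1:ℝ) (t+1) with h | h
      · rw [min_eq_left h, max_eq_right (by norm_num)]
      · rw [min_eq_right h]
        rcases le_total (0:ℝ) (t+1) with h2 | h2
        · rw [max_eq_right h2]; linarith
        · rw [max_eq_left h2]; norm_num
  set S : ℝ → Matrix (Fin 2) (Fin 2) ℝ := fun t => χ t • (P⁻¹ * R (max t 0) * P) with hS_def
  have hmax_cont : Continuous (fun t : ℝ => max t 0) := continuous_id.max continuous_const
  have hRc : ∀ a b : Fin 2, Continuous fun t => R (max t 0) a b := by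
    intro a b
    apply (hRcont a b).comp_continuous hmax_cont
    intro x
    exact le_max_right x 0
  have hrw : ∀ (t : ℝ) (j k : Fin 2), (P⁻¹ * R (max t 0) * P) j k
      = ∑ b : Fin 2, (∑ a : Fin 2, P⁻¹ j a * R (max t 0) a b) * P b k := by
    intro t j k
    rw [Matrix.mul_apply]
    exact Finset.sum_congr rfl fun b _ => by rw [Matrix.mul_apply]
  have hScont : ∀ j k, Continuous fun t => S t j k := by
    intro j k
    rw [hS_def]
    simp only [Matrix.smul_apply, smul_eq_mul]
    apply hχ_cont.mul
    have hc : Continuous fun t => ∑ b : Fin 2, (∑ a : Fin 2, P⁻¹ j a * R (max t 0) a b) * P b k :=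
      continuous_finset_sum _ fun b _ =>
        (continuous_finset_sum _ fun a _ => continuous_const.mul (hRc a b)).mul continuous_const
    exact hc.congr fun t => (hrw t j k).symm
  have hsupp : ∀ t : ℝ, t ≤ -1 → S t = 0 := by
    intro t ht
    rw [hS_def]
    simp only [hχ0 t ht, zero_smul]
  -- integrability of the norm
  have hm_cont : Continuous (fun t => matNorm (S t)) := by
    apply continuous_finset_sum
    intro a _
    exact continuous_finset_sum _ fun b _ => (hScont a b).abs
  have hmatsmul : ∀ (c : ℝ) (M : Matrix (Fin 2) (Fin 2) ℝ), 0 ≤ c →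
      matNorm (c • M) = c * matNorm M := by
    intro c M hc
    unfold matNorm
    simp only [Matrix.smul_apply, smul_eq_mul, abs_mul, abs_of_nonneg hc, Finset.mul_sum]
  have hm_int : Integrable (fun t => matNorm (S t)) := by
    rw [← MeasureTheory.integrableOn_univ, ← Set.Iic_union_Ioi (a := (0:ℝ)),
      MeasureTheory.integrableOn_union]
    constructor
    · -- on Iic 0
      rw [← Set.Iic_union_Ioc_eq_Iic (by norm_num : (-1:ℝ) ≤ 0),
        MeasureTheory.integrableOn_union]
      constructor
      · apply MeasureTheory.integrableOn_zero.congr_fun _ measurableSet_Iic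
        intro x hx
        rw [Set.mem_Iic] at hx
        simp [hsupp x hx, matNorm]
      · exact (hm_cont.integrableOn_Icc (a := (-1:ℝ)) (b := 0)).mono_set Set.Ioc_subset_Icc_self
    · -- on Ioi 0
      have hbase : IntegrableOn (fun t => matNorm P⁻¹ * matNorm P * matNorm (R t))
          (Set.Ioi 0) := by
        exact ((hRint.mono_set Set.Ioi_subset_Ici_self).const_mul _)
      refine hbase.mono' hm_cont.aestronglyMeasurable.restrict ?_
      rw [MeasureTheory.ae_restrict_iff' measurableSet_Ioi]
      refine Filter.Eventually.of_forall fun t ht => ?_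
      rw [Set.mem_Ioi] at ht
      rw [Real.norm_eq_abs, abs_of_nonneg (matNorm_nonneg _), hS_def]
      simp only
      rw [hχ1 t ht.le, one_smul, max_eq_left ht.le]
      calc matNorm (P⁻¹ * R t * P) ≤ matNorm (P⁻¹ * R t) * matNorm P := matNorm_mul_le _ _
        _ ≤ matNorm P⁻¹ * matNorm (R t) * matNorm P :=
            mul_le_mul_of_nonneg_right (matNorm_mul_le _ _) (matNorm_nonneg _)
        _ = matNorm P⁻¹ * matNorm P * matNorm (R t) := by ring
  -- apply the core construction
  obtain ⟨y, hy_deriv, hy_lim⟩ := core (fun j => lam j - lam i) i S (sub_self _)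
    hScont hm_int hsupp
  set φ : ℝ → Fin 2 → ℝ := fun t => exp (lam i * t) • (P.mulVec (y t)) with hφ_def
  refine ⟨φ, ?_, ?_⟩
  · -- the differential equation on [0, ∞)
    intro t ht
    have hSt : S t = P⁻¹ * R t * P := by
      rw [hS_def]
      simp only
      rw [hχ1 t ht, one_smul, max_eq_left ht]
    have hvec : ∀ v : Fin 2 → ℝ,
        lam i • P.mulVec v + P.mulVec (fun j => (lam j - lam i) * v j)
          + P.mulVec ((S t).mulVec v)
        = (A + R t).mulVec (P.mulVec v) := by
      intro v
      have hd : (fun j => (lam j - lam i) * v j) = (Matrix.diagonal lam).mulVec v - lam i • v := by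
        funext j
        simp only [Pi.sub_apply, Pi.smul_apply, smul_eq_mul, Matrix.mulVec_diagonal]
        ring
      rw [hd, Matrix.mulVec_sub, Matrix.mulVec_smul, hSt]
      rw [Matrix.mulVec_mulVec, Matrix.mulVec_mulVec, ← hPA]
      rw [show P * (P⁻¹ * R t * P) = R t * P from by
        rw [← Matrix.mul_assoc, ← Matrix.mul_assoc, hPPinv, Matrix.one_mul]]
      rw [Matrix.add_mulVec, Matrix.mulVec_mulVec, Matrix.mulVec_mulVec]
      abel
    rw [hasDerivAt_pi]
    intro k
    have hkin : HasDerivAt (fun s => ∑ j : Fin 2, P k j * y s j)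
        (∑ j : Fin 2, P k j * ((lam j - lam i) * y t j + (S t).mulVec (y t) j)) t :=
      HasDerivAt.fun_sum fun j _ => (hy_deriv t j).const_mul (P k j)
    have hexp : HasDerivAt (fun s : ℝ => exp (lam i * s)) (lam i * exp (lam i * t)) t := by
      have h0 := ((hasDerivAt_id t).const_mul (lam i)).exp
      simp only [id_eq, mul_one] at h0
      convert h0 using 1
      ring
    have hmul := hexp.fun_mul hkin
    have hφk : (fun s => φ s k) = fun s => exp (lam i * s) * ∑ j : Fin 2, P k j * y s j := by
      funext s
      rw [hφ_def]
      rfl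
    rw [hφk]
    have hVal : ((A + R t).mulVec (φ t)) k
        = lam i * exp (lam i * t) * (∑ j : Fin 2, P k j * y t j)
          + exp (lam i * t)
            * (∑ j : Fin 2, P k j * ((lam j - lam i) * y t j + (S t).mulVec (y t) j)) := by
      have h1 : φ t = exp (lam i * t) • (P.mulVec (y t)) := rfl
      rw [h1, Matrix.mulVec_smul, ← hvec (y t)]
      have e1 : P.mulVec (y t) k = ∑ j : Fin 2, P k j * y t j := rfl
      have e2 : P.mulVec (fun j => (lam j - lam i) * y t j) k
          = ∑ j : Fin 2, P k j * ((lam j - lam i) * y t j) := rfl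
      have e3 : P.mulVec ((S t).mulVec (y t)) k
          = ∑ j : Fin 2, P k j * ((S t).mulVec (y t)) j := rfl
      simp only [Pi.smul_apply, Pi.add_apply, smul_eq_mul, e1, e2, e3]
      rw [Fin.sum_univ_two, Fin.sum_univ_two, Fin.sum_univ_two, Fin.sum_univ_two]
      ring
    rw [hVal]
    convert hmul using 1
  · -- the limit
    have h1 : (fun t => exp (-(lam i) * t) • φ t) = fun t => P.mulVec (y t) := by
      funext t
      rw [hφ_def]
      simp only
      rw [smul_smul, ← exp_add]
      norm_num
    rw [h1]
    have hcontP : Continuous (fun v : Fin 2 → ℝ => P.mulVec v) :=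
      LinearMap.continuous_of_finiteDimensional (Matrix.mulVecLin P)
    have hPe : P.mulVec (fun j => if j = i then (1:ℝ) else 0) = p i := by
      funext k
      show (∑ j : Fin 2, P k j * (if j = i then (1:ℝ) else 0)) = p i k
      rw [Fin.sum_univ_two]
      fin_cases i <;> simp [hP_def]
    have := (hcontP.tendsto _).comp hy_lim
    rw [hPe] at this
    exact this
end
end

section
/- Let c > 0 and let s ≥ 1 be an integer. There exists a constant C > 0, depending only on s and c, such that for every δ ∈ (0,1) and every measurable G : ℝ → ℂ with ∫_ℝ (1 + ξ²)^s |G(ξ)|² dξ < ∞, one has ∫_{−c/2}^{c/2} ( Σ_{m∈ℤ, m≠0} |G((k + c m)/δ)| )² dk ≤ C δ^{2s+1} ∫_ℝ (1 + ξ²)^s |G(ξ)|² dξ. That is, the aliased (nonzero Fourier copy) contributions of the rescaled profile are of size O(δ^{(2s+1)/2}) in L² of the fundamental cell, controlled by the weighted H^s-type norm of G. -/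
/-!
For `|k| ≤ c/2` and `m ≠ 0` the sample point `(k + c m)/δ` has modulus at least `c|m|/(2δ)`, so the
weight `(1 + ξ²)^s` there is at least `(c|m|/(2δ))^(2s)`. Cauchy–Schwarz with these weights bounds
the squared aliased sum at `k` by `(2δ/c)^(2s) ∑_{m≠0} |m|^(-2s)` times the weighted sum of
`(1 + ξ²)^s |G ξ|²` over the copies. Integrating over the cell, the translates `k + c m` tile `ℝ`
at most once, and the substitution `x = δ ξ` contributes the last factor `δ`.
-/

open Real MeasureTheory
open scoped ENNReal

theorem ENNReal.sq_tsum_weight_mul_le {ι : Type*} (w f : ι → ℝ≥0∞) :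
    (∑' i, w i * f i) ^ 2 ≤ (∑' i, w i) * ∑' i, w i * f i ^ 2 := by
  have finite (s : Finset ι) :
      (∑ i ∈ s, w i * f i) ^ 2 ≤ (∑ i ∈ s, w i) * ∑ i ∈ s, w i * f i ^ 2 := by
    calc (∑ i ∈ s, w i * f i) ^ 2
        ≤ ((∑ i ∈ s, w i) ^ (1 - (2:ℝ)⁻¹) * (∑ i ∈ s, w i * f i ^ (2:ℝ)) ^ (2:ℝ)⁻¹) ^ 2 :=
          pow_le_pow_left' (ENNReal.inner_le_weight_mul_Lp_of_nonneg s one_le_two w f) 2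
      _ = _ := by
          rw [mul_pow, ← ENNReal.rpow_mul_natCast, ← ENNReal.rpow_mul_natCast]
          norm_num
  rw [ENNReal.tsum_eq_iSup_sum, ENNReal.iSup_pow]
  exact iSup_le fun s => (finite s).trans
    (mul_le_mul' (ENNReal.sum_le_tsum s) (ENNReal.sum_le_tsum s))

theorem lintegral_comp_div (f : ℝ → ℝ≥0∞) {δ : ℝ} (hδ : 0 < δ) :
    ∫⁻ x, f (x / δ) = ENNReal.ofReal δ * ∫⁻ x, f x := by
  conv_lhs => rw [← Real.smul_map_volume_mul_left hδ.ne']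
  rw [lintegral_smul_measure, abs_of_pos hδ, (measurableEmbedding_mulLeft₀ hδ.ne').lintegral_map]
  simp [hδ.ne']

theorem lintegral_Ioc_tsum_translate_le {f : ℝ → ℝ≥0∞} (hf : Measurable f) {c : ℝ} (hc : 0 < c)
    (t : ℝ) : ∫⁻ k in Set.Ioc t (t + c), ∑' m : ℤ, f (k + c * m) ≤ ∫⁻ x, f x := by
  rw [(isAddFundamentalDomain_Ioc hc t volume).lintegral_eq_tsum'' f,
    lintegral_tsum fun _ => by fun_prop]
  let translation : ℤ → AddSubgroup.zmultiples c :=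
    fun m => ⟨m * c, AddSubgroup.intCast_mul_mem_zmultiples c m⟩
  have hinj : Function.Injective translation := fun m n h => by
    simpa [translation, hc.ne'] using congrArg Subtype.val h
  refine le_of_eq_of_le (tsum_congr fun m => ?_)
    (ENNReal.tsum_comp_le_tsum_of_injective hinj _)
  simp [translation, add_comm, mul_comm]

theorem lintegral_cell_tsum_nonzero_le {g : ℝ → ℝ≥0∞} (hg : Measurable g) {c δ : ℝ}
    (hc : 0 < c) (hδ : 0 < δ) :
    ∫⁻ k in Set.Icc (-(c / 2)) (c / 2), ∑' m : {m : ℤ // m ≠ 0}, g ((k + c * m) / δ) ≤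
      ENNReal.ofReal δ * ∫⁻ x, g x :=
  calc _ ≤ ∫⁻ k in Set.Ioc (-(c / 2)) (-(c / 2) + c), ∑' m : ℤ, g ((k + c * m) / δ) := by
        rw [setLIntegral_congr Ioc_ae_eq_Icc.symm, show -(c / 2) + c = c / 2 by ring]
        gcongr
        exact ENNReal.tsum_comp_le_tsum_of_injective Subtype.val_injective _
    _ ≤ ∫⁻ x, g (x / δ) := lintegral_Ioc_tsum_translate_le (by fun_prop) hc _
    _ = _ := lintegral_comp_div g hδ

theorem integral_toReal_le_of_lintegral_le {α : Type*} [MeasurableSpace α] {μ : Measure α}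
    {f : α → ℝ≥0∞} (hf : AEMeasurable f μ) {b : ℝ} (hb : 0 ≤ b)
    (h : ∫⁻ x, f x ∂μ ≤ ENNReal.ofReal b) : ∫ x, (f x).toReal ∂μ ≤ b := by
  rw [integral_toReal hf (ae_lt_top' hf (h.trans_lt ENNReal.ofReal_lt_top).ne)]
  exact ENNReal.toReal_le_of_le_ofReal hb h

theorem inv_one_add_sq_pow_le {c δ k : ℝ} {m : ℤ} (hc : 0 < c) (hδ : 0 < δ) (hk : |k| ≤ c / 2)
    (hm : m ≠ 0) (s : ℕ) :
    ((1 + ((k + c * m) / δ) ^ 2) ^ s)⁻¹ ≤ (2 * δ / c) ^ (2 * s) * (1 / (m : ℝ) ^ (2 * s)) := by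
  have hm1 : (1 : ℝ) ≤ |(m : ℝ)| := by exact_mod_cast Int.one_le_abs hm
  have hdist : c * |(m : ℝ)| / 2 ≤ |k + c * m| := by
    have := abs_sub_abs_le_abs_sub (c * m) (-k)
    rw [abs_neg, sub_neg_eq_add, add_comm, abs_mul, abs_of_pos hc] at this
    nlinarith
  have hv : c / (2 * δ) * |(m : ℝ)| ≤ |(k + c * m) / δ| := by
    rw [abs_div, abs_of_pos hδ, le_div_iff₀ hδ]
    calc _ = c * |(m : ℝ)| / 2 := by field_simp
      _ ≤ _ := hdist
  have hweight : (c / (2 * δ) * |(m : ℝ)|) ^ (2 * s) ≤ (1 + ((k + c * m) / δ) ^ 2) ^ s :=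
    calc _ ≤ |(k + c * m) / δ| ^ (2 * s) := pow_le_pow_left₀ (by positivity) hv _
      _ = (((k + c * m) / δ) ^ 2) ^ s := by rw [pow_mul, sq_abs]
      _ ≤ _ := pow_le_pow_left₀ (sq_nonneg _) (le_add_of_nonneg_left zero_le_one) s
  have hpos : 0 < (c / (2 * δ) * |(m : ℝ)|) ^ (2 * s) := by positivity
  calc _ ≤ ((c / (2 * δ) * |(m : ℝ)|) ^ (2 * s))⁻¹ := inv_anti₀ hpos hweight
    _ = _ := by rw [mul_pow, (even_two_mul s).pow_abs, mul_inv, ← inv_pow, inv_div, one_div]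

theorem tsum_inv_one_add_sq_pow_le {c δ k : ℝ} (hc : 0 < c) (hδ : 0 < δ) (hk : |k| ≤ c / 2)
    {s : ℕ} (hs : 1 ≤ s) :
    ∑' m : {m : ℤ // m ≠ 0}, (ENNReal.ofReal ((1 + ((k + c * m) / δ) ^ 2) ^ s))⁻¹ ≤
      ENNReal.ofReal ((2 * δ / c) ^ (2 * s) * ∑' m : {m : ℤ // m ≠ 0}, 1 / (m : ℝ) ^ (2 * s)) := by
  have hsum : Summable fun m : {m : ℤ // m ≠ 0} => 1 / (m : ℝ) ^ (2 * s) :=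
    (Real.summable_one_div_int_pow.mpr (by omega)).subtype _
  calc _ = ∑' m : {m : ℤ // m ≠ 0}, ENNReal.ofReal ((1 + ((k + c * m) / δ) ^ 2) ^ s)⁻¹ :=
        tsum_congr fun m => (ENNReal.ofReal_inv_of_pos (by positivity)).symm
    _ ≤ ∑' m : {m : ℤ // m ≠ 0}, ENNReal.ofReal ((2 * δ / c) ^ (2 * s) * (1 / (m : ℝ) ^ (2 * s))) :=
        ENNReal.tsum_le_tsum fun m =>
          ENNReal.ofReal_le_ofReal (inv_one_add_sq_pow_le hc hδ hk m.2 s)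
    _ = _ := by
        rw [← ENNReal.ofReal_tsum_of_nonneg (fun _ => mul_nonneg (by positivity)
          (one_div_nonneg.mpr ((even_two_mul s).pow_nonneg _))) (hsum.mul_left _), tsum_mul_left]

theorem sq_tsum_enorm_le_weighted {E : Type*} [NormedAddCommGroup E] (G : ℝ → E) {c δ k : ℝ}
    (hc : 0 < c) (hδ : 0 < δ) (hk : |k| ≤ c / 2) {s : ℕ} (hs : 1 ≤ s) :
    (∑' m : {m : ℤ // m ≠ 0}, ‖G ((k + c * m) / δ)‖ₑ) ^ 2 ≤
      ENNReal.ofReal ((2 * δ / c) ^ (2 * s) * ∑' m : {m : ℤ // m ≠ 0}, 1 / (m : ℝ) ^ (2 * s)) *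
        ∑' m : {m : ℤ // m ≠ 0},
          ENNReal.ofReal ((1 + ((k + c * m) / δ) ^ 2) ^ s * ‖G ((k + c * m) / δ)‖ ^ 2) := by
  set v : {m : ℤ // m ≠ 0} → ℝ := fun m => (k + c * m) / δ
  set W : {m : ℤ // m ≠ 0} → ℝ≥0∞ := fun m => ENNReal.ofReal ((1 + v m ^ 2) ^ s)
  have hW0 (m) : W m ≠ 0 := (ENNReal.ofReal_pos.mpr (by positivity)).ne'
  have hWtop (m) : W m ≠ ∞ := ENNReal.ofReal_ne_top
  calc (∑' m, ‖G (v m)‖ₑ) ^ 2 = (∑' m, (W m)⁻¹ * (W m * ‖G (v m)‖ₑ)) ^ 2 := by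
        simp_rw [ENNReal.inv_mul_cancel_left (hW0 _) (hWtop _)]
    _ ≤ (∑' m, (W m)⁻¹) * ∑' m, (W m)⁻¹ * (W m * ‖G (v m)‖ₑ) ^ 2 :=
        ENNReal.sq_tsum_weight_mul_le _ _
    _ = (∑' m, (W m)⁻¹) * ∑' m, W m * ‖G (v m)‖ₑ ^ 2 := by
        simp_rw [mul_pow, sq (W _), mul_assoc, ENNReal.inv_mul_cancel_left (hW0 _) (hWtop _)]
    _ ≤ _ := by
        gcongr
        · exact tsum_inv_one_add_sq_pow_le hc hδ hk hs
        · rw [ENNReal.ofReal_mul (by positivity), ENNReal.ofReal_pow (norm_nonneg _),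
            ofReal_norm]

theorem lintegral_sq_tsum_enorm_le {E : Type*} [NormedAddCommGroup E] [MeasurableSpace E]
    [OpensMeasurableSpace E] {G : ℝ → E} (hG : Measurable G) {c δ : ℝ} (hc : 0 < c) (hδ : 0 < δ)
    {s : ℕ} (hs : 1 ≤ s) :
    ∫⁻ k in Set.Icc (-(c / 2)) (c / 2), (∑' m : {m : ℤ // m ≠ 0}, ‖G ((k + c * m) / δ)‖ₑ) ^ 2 ≤
      ENNReal.ofReal ((2 / c) ^ (2 * s) * (∑' m : {m : ℤ // m ≠ 0}, 1 / (m : ℝ) ^ (2 * s)) *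
        δ ^ (2 * s + 1)) * ∫⁻ ξ, ENNReal.ofReal ((1 + ξ ^ 2) ^ s * ‖G ξ‖ ^ 2) := by
  set B := ∑' m : {m : ℤ // m ≠ 0}, 1 / (m : ℝ) ^ (2 * s)
  have hB : 0 ≤ B := tsum_nonneg fun _ => one_div_nonneg.mpr ((even_two_mul s).pow_nonneg _)
  set g : ℝ → ℝ≥0∞ := fun ξ => ENNReal.ofReal ((1 + ξ ^ 2) ^ s * ‖G ξ‖ ^ 2)
  calc _ ≤ ∫⁻ k in Set.Icc (-(c / 2)) (c / 2), ENNReal.ofReal ((2 * δ / c) ^ (2 * s) * B) *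
          ∑' m : {m : ℤ // m ≠ 0}, g ((k + c * m) / δ) :=
        setLIntegral_mono' measurableSet_Icc fun k hk =>
          sq_tsum_enorm_le_weighted G hc hδ (abs_le.mpr hk) hs
    _ = ENNReal.ofReal ((2 * δ / c) ^ (2 * s) * B) * ∫⁻ k in Set.Icc (-(c / 2)) (c / 2),
          ∑' m : {m : ℤ // m ≠ 0}, g ((k + c * m) / δ) :=
        lintegral_const_mul _ (Measurable.tsum fun _ => by fun_prop)
    _ ≤ ENNReal.ofReal ((2 * δ / c) ^ (2 * s) * B) * (ENNReal.ofReal δ * ∫⁻ ξ, g ξ) := by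
        gcongr
        exact lintegral_cell_tsum_nonzero_le (by fun_prop) hc hδ
    _ = _ := by
        rw [← mul_assoc, ← ENNReal.ofReal_mul (by positivity)]
        ring_nf

/-- For a cell size `c > 0` and `s ≥ 1`, there is a constant `C = C(s, c)` such
that for every `δ ∈ (0,1)` and every measurable `G` with finite weighted norm, the aliased
(nonzero Fourier copy) contributions of the rescaled profile satisfy
`∫_{−c/2}^{c/2} (Σ_{m≠0} |G((k+cm)/δ)|)² dk ≤ C δ^{2s+1} ∫ (1+ξ²)^s |G(ξ)|² dξ`. -/
theorem aliasing_tail_bound (c : ℝ) (hc : 0 < c) (s : ℕ) (hs : 1 ≤ s) :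
    ∃ C : ℝ, 0 < C ∧
      ∀ δ : ℝ, δ ∈ Set.Ioo (0 : ℝ) 1 →
      ∀ G : ℝ → ℂ, Measurable G →
        Integrable (fun ξ : ℝ => (1 + ξ ^ 2) ^ s * ‖G ξ‖ ^ 2) →
        (∫ k in Set.Icc (-(c / 2)) (c / 2),
            (∑' m : {m : ℤ // m ≠ 0}, ‖G ((k + c * ((m : ℤ) : ℝ)) / δ)‖) ^ 2)
          ≤ C * δ ^ (2 * s + 1) *
              ∫ ξ : ℝ, (1 + ξ ^ 2) ^ s * ‖G ξ‖ ^ 2 := by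
  set B := ∑' m : {m : ℤ // m ≠ 0}, 1 / (m : ℝ) ^ (2 * s)
  have hB : 0 < B := ((Real.summable_one_div_int_pow.mpr (by omega)).subtype _).tsum_pos
    (fun _ => one_div_nonneg.mpr ((even_two_mul s).pow_nonneg _)) ⟨1, one_ne_zero⟩ (by simp)
  refine ⟨(2 / c) ^ (2 * s) * B, by positivity, fun δ ⟨hδ, _⟩ G hG hInt => ?_⟩
  have hlintegral := lintegral_sq_tsum_enorm_le hG hc hδ hs
  rw [← ofReal_integral_eq_lintegral_ofReal hInt (ae_of_all _ fun _ => by positivity),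
    ← ENNReal.ofReal_mul (by positivity)] at hlintegral
  have hintegrand (k : ℝ) : (∑' m : {m : ℤ // m ≠ 0}, ‖G ((k + c * m) / δ)‖) ^ 2 =
      ((∑' m : {m : ℤ // m ≠ 0}, ‖G ((k + c * m) / δ)‖ₑ) ^ 2).toReal := by
    rw [ENNReal.toReal_pow, ENNReal.tsum_toReal_eq fun _ => enorm_ne_top]
    simp only [toReal_enorm]
  simp_rw [hintegrand]
  exact integral_toReal_le_of_lintegral_le (by fun_prop) (by positivity) hlintegral
end
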